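/- arXiv:1508.01435 — 2 statements merged into one kernel-verified Lean document; each statement's English description precedes it below -/
import Mathlib

section
/- Under the hypotheses above, the basis functions defined by Φ = (S(WVS)⁺W)ᵀ D 𝒫(x), where D is a diagonal matrix and 𝒫(x) is the vector of monomials with first entry equal to the constant 1 and D₁₁ = 1, form a partition of unity: the sum over j of φⱼ(x) equals 1 for all x. -/
open Matrix

/-- Moore–Penrose pseudoinverse of a full-column-rank matrix, `(AᵀA)⁻¹Aᵀ`. -/
noncomputable def pinv {m n : ℕ} (A : Matrix (Fin m) (Fin n) ℝ) :
    Matrix (Fin n) (Fin m) ℝ := (Aᵀ * A)⁻¹ * Aᵀ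

theorem stmt1 {m n k : ℕ} (hn : 0 < n) (hmn : n ≤ m)
    (P : (Fin k → ℝ) → Fin n → ℝ) (hP1 : ∀ x, P x ⟨0, hn⟩ = 1)
    (dD : Fin n → ℝ) (hD1 : dD ⟨0, hn⟩ = 1)
    (X : Fin m → (Fin k → ℝ))
    (V : Matrix (Fin m) (Fin n) ℝ) (hV : ∀ i j, V i j = dD j * P (X i) j)
    (hrank : V.rank = n)
    (w : Fin m → ℝ) (hw : ∀ i, 0 < w i)
    (s : Fin n → ℝ) (hs : ∀ j, 0 < s j) :
    ∀ x : Fin k → ℝ,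
      ∑ j, ((Matrix.diagonal s *
          pinv (Matrix.diagonal w * V * Matrix.diagonal s) * Matrix.diagonal w)ᵀ.mulVec
            (fun l => dD l * P x l)) j = 1 := by
  intro x
  set i0 : Fin n := ⟨0, hn⟩
  set W : Matrix (Fin m) (Fin m) ℝ := Matrix.diagonal w with hW
  set S : Matrix (Fin n) (Fin n) ℝ := Matrix.diagonal s with hS
  set A : Matrix (Fin m) (Fin n) ℝ := W * V * S with hA
  -- V has trivial kernel
  have hVinj : ∀ z : Fin n → ℝ, V *ᵥ z = 0 → z = 0 := by
    have hker : LinearMap.ker V.mulVecLin = ⊥ := by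
      have h1 := V.mulVecLin.finrank_range_add_finrank_ker
      rw [show (Module.finrank ℝ (LinearMap.range V.mulVecLin)) = n from hrank] at h1
      simp only [Module.finrank_pi, Fintype.card_fin] at h1
      have h2 : Module.finrank ℝ (LinearMap.ker V.mulVecLin) = 0 := by omega
      exact Submodule.finrank_eq_zero.mp h2
    intro z hz
    exact Matrix.ker_mulVecLin_eq_bot_iff.mp hker z hz
  -- A has trivial kernel
  have hAinj : ∀ z : Fin n → ℝ, A *ᵥ z = 0 → z = 0 := by
    intro z hz
    rw [hA, ← Matrix.mulVec_mulVec, ← Matrix.mulVec_mulVec] at hz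
    have h1 : V *ᵥ (S *ᵥ z) = 0 := by
      funext i
      have := congrFun hz i
      rw [hW, Matrix.mulVec_diagonal] at this
      have hwi := (hw i).ne'
      simpa [hwi] using this
    have h2 : S *ᵥ z = 0 := hVinj _ h1
    funext j
    have := congrFun h2 j
    rw [hS, Matrix.mulVec_diagonal] at this
    have hsj := (hs j).ne'
    simpa [hsj] using this
  -- AᵀA is invertible
  have hBunit : IsUnit (Aᵀ * A) := by
    rw [← Matrix.mulVec_injective_iff_isUnit]
    rw [show (Aᵀ * A).mulVec = (Aᵀ * A).mulVecLin from rfl, ← LinearMap.ker_eq_bot]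
    rw [Matrix.ker_mulVecLin_eq_bot_iff]
    intro v hv
    have : v ∈ LinearMap.ker (Aᵀ * A).mulVecLin := hv
    rw [Matrix.ker_mulVecLin_transpose_mul_self] at this
    exact hAinj v this
  have hpinvA : pinv A * A = 1 := by
    rw [pinv, Matrix.mul_assoc, Matrix.nonsing_inv_mul _ ((Matrix.isUnit_iff_isUnit_det _).mp hBunit)]
  -- the key identity: row sums of S (WVS)⁺ W are the indicator of the constant
  have hM1 : (S * pinv A * W) *ᵥ (fun _ => (1 : ℝ)) = Pi.single i0 1 := by
    set c : Fin n → ℝ := Pi.single i0 (s i0)⁻¹ with hc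
    have hSc : S *ᵥ c = Pi.single i0 1 := by
      funext j
      rw [hS, Matrix.mulVec_diagonal, hc]
      rcases eq_or_ne j i0 with rfl | hne
      · simp [mul_inv_cancel₀ (hs i0).ne']
      · simp [Pi.single_eq_of_ne hne]
    have hAc : A *ᵥ c = w := by
      rw [hA, ← Matrix.mulVec_mulVec, ← Matrix.mulVec_mulVec, hSc]
      have hV1 : V *ᵥ (Pi.single i0 1 : Fin n → ℝ) = fun _ => (1 : ℝ) := by
        funext i
        simp [Matrix.mulVec_single, hV, hP1, hD1]
      rw [hV1]
      funext i
      simp [hW, Matrix.mulVec_diagonal]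
    have hW1 : W *ᵥ (fun _ => (1 : ℝ)) = w := by
      funext i; simp [hW, Matrix.mulVec_diagonal]
    rw [← Matrix.mulVec_mulVec, ← Matrix.mulVec_mulVec, hW1, ← hAc,
      Matrix.mulVec_mulVec, Matrix.mulVec_mulVec, Matrix.mul_assoc, hpinvA,
      Matrix.mul_one, hSc]
  -- conclude
  set v : Fin n → ℝ := fun l => dD l * P x l with hv
  set M : Matrix (Fin n) (Fin m) ℝ := S * pinv A * W with hM
  calc ∑ j, (Mᵀ *ᵥ v) j
      = ∑ j, ∑ l, M l j * v l := by
        simp [Matrix.mulVec, dotProduct, Matrix.transpose_apply]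
    _ = ∑ l, (∑ j, M l j) * v l := by
        rw [Finset.sum_comm]
        simp [Finset.sum_mul]
    _ = ∑ l, (Pi.single i0 1 : Fin n → ℝ) l * v l := by
        refine Finset.sum_congr rfl fun l _ => ?_
        have := congrFun hM1 l
        simp only [Matrix.mulVec, dotProduct, mul_one] at this
        rw [this]
    _ = 1 := by
        simp [Pi.single_apply, hv, hP1, hD1]
end

section
/- Let {φⱼ} be the GLP basis functions on a stencil {xⱼ} obtained from weighted least squares with invertible weighting W, scaling S, and full-column-rank generalized Vandermonde matrix V. Then for any polynomial p of degree at most d, the approximation p^h(x) = Σⱼ p(xⱼ) φⱼ(x) reproduces p exactly: p^h = p. -/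
open Matrix

/-- A square real matrix of full rank is a unit. -/
lemma isUnit_of_rank_eq {n : ℕ} (B : Matrix (Fin n) (Fin n) ℝ) (h : B.rank = n) :
    IsUnit B := by
  rw [← Matrix.mulVec_injective_iff_isUnit]
  have h1 : LinearMap.ker B.mulVecLin = ⊥ := by
    have h2 := B.mulVecLin.finrank_range_add_finrank_ker
    rw [show Module.finrank ℝ (LinearMap.range B.mulVecLin) = n from h] at h2
    simp only [Module.finrank_fintype_fun_eq_card, Fintype.card_fin] at h2
    exact Submodule.finrank_eq_zero.mp (by omega)
  intro a b hab
  have : B.mulVecLin a = B.mulVecLin b := hab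
  exact (LinearMap.ker_eq_bot.mp h1) this

theorem stmt8 {m n k d : ℕ} (hmn : n ≤ m)
    (X : Fin m → (Fin k → ℝ))
    (P : (Fin k → ℝ) → Fin n → ℝ) (dD : Fin n → ℝ)
    (V : Matrix (Fin m) (Fin n) ℝ) (hV : ∀ i j, V i j = dD j * P (X i) j)
    (hrank : V.rank = n)
    -- the scaled monomials `dD j * P · j` span the polynomials of degree at most `d`
    (hspan : ∀ q : MvPolynomial (Fin k) ℝ, q.totalDegree ≤ d →
      ∃ b : Fin n → ℝ, ∀ x, MvPolynomial.eval x q = ∑ j, b j * (dD j * P x j))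
    (w : Fin m → ℝ) (hw : ∀ i, 0 < w i)
    (s : Fin n → ℝ) (hs : ∀ j, 0 < s j)
    (p : MvPolynomial (Fin k) ℝ) (hp : p.totalDegree ≤ d) :
    ∀ x : Fin k → ℝ,
      ∑ j, MvPolynomial.eval (X j) p *
        ((Matrix.diagonal s *
            pinv (Matrix.diagonal w * V * Matrix.diagonal s) * Matrix.diagonal w)ᵀ.mulVec
          (fun l => dD l * P x l)) j
      = MvPolynomial.eval x p := by
  intro x
  obtain ⟨b, hb⟩ := hspan p hp
  set W : Matrix (Fin m) (Fin m) ℝ := Matrix.diagonal w with hW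
  set S : Matrix (Fin n) (Fin n) ℝ := Matrix.diagonal s with hS
  set A : Matrix (Fin m) (Fin n) ℝ := W * V * S with hA
  have hdetW : IsUnit W.det := by
    rw [hW, Matrix.det_diagonal]
    exact (Finset.prod_pos (fun i _ => hw i)).ne'.isUnit
  have hdetS : IsUnit S.det := by
    rw [hS, Matrix.det_diagonal]
    exact (Finset.prod_pos (fun i _ => hs i)).ne'.isUnit
  have hrankA : A.rank = n := by
    rw [hA, Matrix.rank_mul_eq_left_of_isUnit_det S _ hdetS,
      Matrix.rank_mul_eq_right_of_isUnit_det W V hdetW, hrank]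
  have hAtA : IsUnit (Aᵀ * A) := by
    apply isUnit_of_rank_eq
    rw [Matrix.rank_transpose_mul_self, hrankA]
  have hpinv : pinv A * A = 1 := by
    rw [pinv, Matrix.mul_assoc, Matrix.nonsing_inv_mul _ ((Matrix.isUnit_iff_isUnit_det _).mp hAtA)]
  have hWV : W * V = A * S⁻¹ := by
    rw [hA, Matrix.mul_assoc (W * V), Matrix.mul_nonsing_inv _ hdetS, Matrix.mul_one]
  have hMV : S * pinv A * W * V = 1 := by
    rw [Matrix.mul_assoc (S * pinv A), hWV, ← Matrix.mul_assoc, Matrix.mul_assoc S (pinv A) A,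
      hpinv, Matrix.mul_one, Matrix.mul_nonsing_inv _ hdetS]
  set M : Matrix (Fin n) (Fin m) ℝ := S * pinv A * W with hM
  set f : Fin n → ℝ := fun l => dD l * P x l with hf
  have hpX : (fun i => MvPolynomial.eval (X i) p) = V.mulVec b := by
    funext i
    rw [Matrix.mulVec, dotProduct, hb (X i)]
    exact Finset.sum_congr rfl fun l _ => by rw [hV i l]; ring
  calc ∑ j, MvPolynomial.eval (X j) p * (Mᵀ.mulVec f) j
      = (fun i => MvPolynomial.eval (X i) p) ⬝ᵥ (Mᵀ.mulVec f) := rfl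
    _ = (M.mulVec (fun i => MvPolynomial.eval (X i) p)) ⬝ᵥ f := by
        rw [Matrix.dotProduct_mulVec, Matrix.vecMul_transpose]
    _ = ((M * V).mulVec b) ⬝ᵥ f := by rw [hpX, Matrix.mulVec_mulVec]
    _ = b ⬝ᵥ f := by rw [hM, hMV, Matrix.one_mulVec]
    _ = MvPolynomial.eval x p := (hb x).symm
end
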